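/- arXiv:2004.13916 — 3 statements merged into one kernel-verified Lean document; each statement's English description precedes it below -/
import Mathlib

section
/- For a partition λ, the Nekrasov factor N_{λ,∅}(q^{-1}) = ∏_{□∈λ}(1 - q^{-ℓ_λ(□)-a_∅(□)-1}·q^{-1}) is nonzero if and only if λ is a column, i.e., λ = (1^n) for some n ≥ 0. (Here for □=(i,j), a_∅(□) = -j and ℓ_λ(□) = λ'_j - i.) -/
open Finset

noncomputable section

/-- The `i`-th part (0-indexed) of a partition given as a list of parts. -/
def part (l : List ℕ) (i : ℕ) : ℕ := l.getD i 0

/-- The `j`-th column length (0-indexed), i.e. λ'_{j+1} = #{i : λ_i ≥ j+1}. -/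
def conjPart (l : List ℕ) (j : ℕ) : ℕ := (l.filter (fun p => j < p)).length

/-- A list of naturals represents a partition: weakly decreasing with positive parts. -/
def IsPartition (l : List ℕ) : Prop := l.Pairwise (· ≥ ·) ∧ ∀ p ∈ l, 0 < p

/-- The Nekrasov factor N_{λ,μ}(u) =
  ∏_{(i,j)∈λ}(1 - q^{-ℓ_λ(i,j)-a_μ(i,j)-1} u) · ∏_{(i,j)∈μ}(1 - q^{ℓ_μ(i,j)+a_λ(i,j)+1} u),
  with cells 0-indexed: arm a_μ(i,j) = μ_{i+1} - (j+1), leg ℓ_λ(i,j) = λ'_{j+1} - (i+1). -/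
def nek (q u : ℂ) (lam mu : List ℕ) : ℂ :=
  (∏ i ∈ Finset.range lam.length, ∏ j ∈ Finset.range (part lam i),
    (1 - q ^ (-((conjPart lam j : ℤ) - ((i : ℤ) + 1)) - ((part mu i : ℤ) - ((j : ℤ) + 1)) - 1) * u)) *
  (∏ i ∈ Finset.range mu.length, ∏ j ∈ Finset.range (part mu i),
    (1 - q ^ (((conjPart mu j : ℤ) - ((i : ℤ) + 1)) + ((part lam i : ℤ) - ((j : ℤ) + 1)) + 1) * u))

/-- λ̄ : all parts decreased by 1, zero parts dropped. -/
def bar (l : List ℕ) : List ℕ := (l.map (fun p => p - 1)).filter (fun p => 0 < p)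

/-- r_n(λ) = (λ_1+1, …, λ_n+1, λ_{n+2}, λ_{n+3}, …). -/
def rn (n : ℕ) (l : List ℕ) : List ℕ :=
  ((List.range n).map (fun i => part l i + 1)) ++ l.drop (n + 1)

/-- The conjugate (transposed) partition as a list. -/
def conjList (l : List ℕ) : List ℕ :=
  (List.range (part l 0)).map (fun j => conjPart l j)

end

/-!
With `μ = ∅` and `u = q⁻¹`, the factor of the (0-indexed) cell `(i, j)` of `λ` is
`1 - q ^ (i + j - λ'_j)`, which vanishes iff `λ'_j = i + j`. In a column every cell has `j = 0`
and `i < λ'_0`, so no factor vanishes as `q` is not a root of unity. Otherwise `λ` has a second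
column, and its bottom cell `(λ'_1 - 1, 1)` gives the factor `1 - q⁰ = 0`.
-/

@[simp] lemma part_cons_zero (a : ℕ) (l : List ℕ) : part (a :: l) 0 = a := rfl

lemma conjPart_cons (a : ℕ) (l : List ℕ) (j : ℕ) :
    conjPart (a :: l) j = conjPart l j + if j < a then 1 else 0 := by
  unfold conjPart
  split_ifs with h <;> simp [h]

lemma conjPart_le_length (l : List ℕ) (j : ℕ) : conjPart l j ≤ l.length :=
  List.length_filter_le _ _

lemma le_part_zero_of_mem {l : List ℕ} (hs : l.Pairwise (· ≥ ·)) {p : ℕ} (hp : p ∈ l) :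
    p ≤ part l 0 := by
  cases l with
  | nil => simp at hp
  | cons a l =>
    rcases List.mem_cons.mp hp with rfl | hp
    · rfl
    · exact (List.pairwise_cons.mp hs).1 p hp

lemma pos_conjPart_of_lt_part_zero {l : List ℕ} {j : ℕ} (h : j < part l 0) : 0 < conjPart l j := by
  cases l with
  | nil => simp [part] at h
  | cons a l => simp only [part_cons_zero] at h; simp [conjPart_cons, h]

lemma lt_part_of_lt_conjPart {l : List ℕ} (hs : l.Pairwise (· ≥ ·)) {i j : ℕ}
    (h : i < conjPart l j) : j < part l i := by
  induction l generalizing i with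
  | nil => exact absurd h (Nat.not_lt_zero i)
  | cons a l ih =>
    rw [List.pairwise_cons] at hs
    cases i with
    | zero =>
      obtain ⟨b, hb⟩ := List.exists_mem_of_length_pos h
      obtain ⟨hb, hjb⟩ := List.mem_filter.mp hb
      exact (of_decide_eq_true hjb).trans_le (le_part_zero_of_mem (List.pairwise_cons.mpr hs) hb)
    | succ i =>
      rw [conjPart_cons] at h
      exact ih hs.2 (by split_ifs at h <;> omega)

lemma eq_replicate_one_of_part_zero_le_one {l : List ℕ} (hl : IsPartition l)
    (h : part l 0 ≤ 1) : l = List.replicate l.length 1 :=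
  List.eq_replicate_iff.mpr ⟨rfl, fun p hp =>
    le_antisymm ((le_part_zero_of_mem hl.1 hp).trans h) (hl.2 p hp)⟩

lemma nek_inv_nil {q : ℂ} (hq : q ≠ 0) (lam : List ℕ) :
    nek q q⁻¹ lam [] = ∏ i ∈ range lam.length, ∏ j ∈ range (part lam i),
      (1 - q ^ ((i : ℤ) + j - conjPart lam j)) := by
  simp only [nek, List.length_nil, range_zero, prod_empty, mul_one]
  refine prod_congr rfl fun i _ => prod_congr rfl fun j _ => ?_
  rw [← zpow_neg_one q, ← zpow_add₀ hq]
  have hnil : part [] i = 0 := rfl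
  rw [hnil, Nat.cast_zero]
  ring_nf

lemma nek_inv_nil_eq_zero {q : ℂ} (hq : q ≠ 0) {lam : List ℕ} (hs : lam.Pairwise (· ≥ ·))
    (h : 2 ≤ part lam 0) : nek q q⁻¹ lam [] = 0 := by
  rw [nek_inv_nil hq]
  have hbottom : conjPart lam 1 - 1 < conjPart lam 1 :=
    Nat.sub_one_lt (pos_conjPart_of_lt_part_zero h).ne'
  refine prod_eq_zero (i := conjPart lam 1 - 1)
    (mem_range.mpr (hbottom.trans_le (conjPart_le_length lam 1))) ?_
  refine prod_eq_zero (i := 1) (mem_range.mpr (lt_part_of_lt_conjPart hs hbottom)) ?_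
  have hexp : ((conjPart lam 1 - 1 : ℕ) : ℤ) + (1 : ℕ) - conjPart lam 1 = 0 := by omega
  rw [hexp, zpow_zero, sub_self]

lemma nek_inv_nil_replicate_ne_zero {q : ℂ} (hq : q ≠ 0) (hroot : ∀ m : ℤ, m ≠ 0 → q ^ m ≠ 1)
    (n : ℕ) : nek q q⁻¹ (List.replicate n 1) [] ≠ 0 := by
  have hconj : conjPart (List.replicate n 1) 0 = n := by simp [conjPart]
  rw [nek_inv_nil hq, prod_ne_zero_iff]
  intro i hi
  rw [List.length_replicate, mem_range] at hi
  have hpart : part (List.replicate n 1) i = 1 := by simp [part, hi]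
  rw [hpart, prod_range_one, hconj]
  exact sub_ne_zero.mpr fun h => hroot _ (by omega) h.symm

theorem stmt0 (q : ℂ) (hq : q ≠ 0) (hroot : ∀ m : ℤ, m ≠ 0 → q ^ m ≠ 1)
    (lam : List ℕ) (hlam : IsPartition lam) :
    nek q q⁻¹ lam [] ≠ 0 ↔ ∃ n : ℕ, lam = List.replicate n 1 := by
  constructor
  · intro h
    refine ⟨lam.length, eq_replicate_one_of_part_zero_le_one hlam ?_⟩
    by_contra! h2
    exact h (nek_inv_nil_eq_zero hq hlam.1 h2)
  · rintro ⟨n, rfl⟩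
    exact nek_inv_nil_replicate_ne_zero hq hroot n
end

section
/- For partitions λ, μ, the Nekrasov factor satisfies N_{λ,μ}(q^{-1}) ≠ 0 if and only if λ = r_n(μ) for some n ≥ 0, where r_n(μ) = (μ_1+1, …, μ_n+1, μ_{n+2}, μ_{n+3}, …) is obtained by adding 1 to the first n parts and deleting the (n+1)-st part. (Assume q is not a root of unity.) -/
open Finset

/-!
Since `q` is not a root of unity, a factor of `N_{λ,μ}(q⁻¹)` vanishes only when its exponent
is `0`: at a cell of `λ` with `ℓ_λ + a_μ = -2`, or at a cell of `μ` with `ℓ_μ + a_λ = 0`.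
A cell of the first kind exists iff `λ_i ≥ μ_i + 2` for some `i`, and one of the second kind iff
`λ_i ≤ μ_i` and `λ_i ≠ μ_{i+1}` for some `i`: if row `i` has the defect but no such cell, the
defect moves to row `i + 1`, hence to every later row, which is absurd. So `N_{λ,μ}(q⁻¹) ≠ 0`
iff `λ_i ∈ {μ_i + 1, μ_{i+1}}` for all `i`, and as `λ` is weakly decreasing the first
alternative holds exactly for `i < n`, i.e. `λ = r_n(μ)`.
-/

section Parts

variable {l : List ℕ}

lemma part_eq_zero {i : ℕ} (h : l.length ≤ i) : part l i = 0 :=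
  List.getD_eq_default _ _ h

lemma lt_length_of_lt_part {i j : ℕ} (h : j < part l i) : i < l.length := by
  by_contra hi
  rw [part_eq_zero (not_lt.1 hi)] at h
  exact Nat.not_lt_zero _ h

lemma part_antitone (hl : l.Pairwise (· ≥ ·)) : Antitone (part l) := by
  intro i j hij
  by_cases hj : j < l.length
  · simp only [part, List.getD_eq_getElem _ _ hj, List.getD_eq_getElem _ _ (hij.trans_lt hj)]
    rcases hij.eq_or_lt with rfl | hij
    · rfl
    · exact List.pairwise_iff_getElem.1 hl _ _ _ _ hij
  · simp [part_eq_zero (not_lt.1 hj)]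

lemma lt_conjPart_iff (hl : l.Pairwise (· ≥ ·)) (i j : ℕ) :
    i < conjPart l j ↔ j < part l i := by
  induction l generalizing i with
  | nil => simp [conjPart, part]
  | cons a t ih =>
    by_cases hja : j < a
    · have hcons : conjPart (a :: t) j = conjPart t j + 1 := by
        simp [conjPart, hja]
      cases i with
      | zero => simpa [hcons, part] using hja
      | succ i => simpa [hcons, part] using ih hl.of_cons i
    · have hcons : conjPart (a :: t) j = 0 := by
        simp only [conjPart, List.length_eq_zero_iff, List.filter_eq_nil_iff, decide_eq_true_eq,
          not_lt]
        intro b hb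
        rcases List.mem_cons.1 hb with rfl | hb
        · exact not_lt.1 hja
        · exact (List.rel_of_pairwise_cons hl hb).trans (not_lt.1 hja)
      have : part (a :: t) i ≤ a := part_antitone hl (Nat.zero_le i)
      simp only [hcons, Nat.not_lt_zero, false_iff, not_lt]
      omega

lemma eq_of_part_eq {l₁ l₂ : List ℕ} (h₁ : ∀ p ∈ l₁, 0 < p) (h₂ : ∀ p ∈ l₂, 0 < p)
    (h : ∀ i, part l₁ i = part l₂ i) : l₁ = l₂ := by
  refine List.ext_getElem? fun i => ?_
  have hi := h i
  simp only [part, List.getD_eq_getElem?_getD] at hi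
  rcases e₁ : l₁[i]? with _ | a <;> rcases e₂ : l₂[i]? with _ | b <;>
    simp only [e₁, e₂, Option.getD_none, Option.getD_some] at hi
  · rfl
  · exact absurd hi (h₂ b (List.mem_of_getElem? e₂)).ne
  · exact absurd hi (h₁ a (List.mem_of_getElem? e₁)).ne'
  · rw [hi]

lemma part_rn (n i : ℕ) :
    part (rn n l) i = if i < n then part l i + 1 else part l (i + 1) := by
  split_ifs with h
  · simp [rn, part, List.getD_eq_getElem?_getD, List.getElem?_append_left, h]
  · simp [rn, part, List.getD_eq_getElem?_getD, List.getElem?_append_right, not_lt.1 h]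
    congr 2
    omega

lemma rn_pos (hl : ∀ p ∈ l, 0 < p) (n : ℕ) : ∀ p ∈ rn n l, 0 < p := by
  intro p hp
  rcases List.mem_append.1 hp with hp | hp
  · obtain ⟨i, -, rfl⟩ := List.mem_map.1 hp
    exact Nat.succ_pos _
  · exact hl p (List.mem_of_mem_drop hp)

end Parts

section Cells

/- For the 0-indexed cell `(i, j)`, `conjPart l j + part m i = i + j` says `ℓ_l + a_m = -2`, and
`conjPart m j + part l i = i + j + 2` says `ℓ_m + a_l = 0`. -/

variable {l m : List ℕ} (hl : l.Pairwise (· ≥ ·)) (hm : m.Pairwise (· ≥ ·))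
include hl hm

lemma forall_cell_ne_iff_le :
    (∀ i j, j < part l i → conjPart l j + part m i ≠ i + j) ↔ ∀ i, part l i ≤ part m i + 1 := by
  constructor
  · intro hcell i
    by_contra! hi
    have hprop : ∀ k ≥ i, part m k + 1 < part l k := by
      intro k hk
      induction k, hk using Nat.le_induction with
      | base => exact hi
      | succ k _ ih =>
        have hcol := (lt_conjPart_iff hl k _).2 ih
        have hne := hcell k _ ih
        have hnext := (lt_conjPart_iff hl (k + 1) (part m k + 1)).1 (by omega)
        have := part_antitone hm (k.le_add_right 1)
        omega
    have hend := hprop (i + l.length) (Nat.le_add_right _ _)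
    rw [part_eq_zero (Nat.le_add_left _ _)] at hend
    exact Nat.not_lt_zero _ hend
  · intro h i j hj
    have := (lt_conjPart_iff hl i j).2 hj
    have := h i
    omega

lemma le_part_of_forall_cell_ne_add_two
    (hcell : ∀ i j, j < part m i → conjPart m j + part l i ≠ i + j + 2) (i : ℕ) :
    part m (i + 1) ≤ part l i := by
  by_contra! hi
  have hprop : ∀ k ≥ i, part l k < part m (k + 1) := by
    intro k hk
    induction k, hk using Nat.le_induction with
    | base => exact hi
    | succ k _ ih =>
      have hcol := (lt_conjPart_iff hm (k + 1) _).2 ih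
      have hne := hcell k _ (ih.trans_le (part_antitone hm (k.le_add_right 1)))
      have hnext := (lt_conjPart_iff hm (k + 2) (part l k)).1 (by omega)
      have := part_antitone hl (k.le_add_right 1)
      show part l (k + 1) < part m (k + 2)
      omega
  have hend := hprop (i + m.length) (Nat.le_add_right _ _)
  rw [part_eq_zero (show m.length ≤ i + m.length + 1 by omega)] at hend
  exact Nat.not_lt_zero _ hend

lemma forall_cell_ne_add_two_iff :
    (∀ i j, j < part m i → conjPart m j + part l i ≠ i + j + 2) ↔
      ∀ i, part m i < part l i ∨ part l i = part m (i + 1) := by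
  constructor
  · intro hcell i
    have hlow := le_part_of_forall_cell_ne_add_two hl hm hcell i
    by_contra! hi
    have hj : part l i - 1 < part m i := by omega
    have hcol := (lt_conjPart_iff hm i _).2 hj
    have hne := hcell i _ hj
    have hnext := (lt_conjPart_iff hm (i + 1) (part l i - 1)).1 (by omega)
    omega
  · intro h i j hj
    have hcol := (lt_conjPart_iff hm i j).2 hj
    have hnext := lt_conjPart_iff hm (i + 1) j
    have := h i
    omega

end Cells

lemma exists_eq_rn_iff {lam mu : List ℕ} (hlam : IsPartition lam) (hmu : ∀ p ∈ mu, 0 < p) :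
    (∃ n, lam = rn n mu) ↔ ∀ i, part lam i = part mu i + 1 ∨ part lam i = part mu (i + 1) := by
  constructor
  · rintro ⟨n, rfl⟩ i
    rw [part_rn]
    split_ifs
    exacts [Or.inl rfl, Or.inr rfl]
  · intro h
    have hex : ∃ n, part lam n ≠ part mu n + 1 :=
      ⟨lam.length, by rw [part_eq_zero le_rfl]; omega⟩
    set n := Nat.find hex
    have htail : ∀ k ≥ n, part lam k = part mu (k + 1) := by
      intro k hk
      induction k, hk using Nat.le_induction with
      | base => exact (h n).resolve_left (Nat.find_spec hex)
      | succ k _ ih =>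
        have := part_antitone hlam.1 (k.le_add_right 1)
        exact (h (k + 1)).resolve_left (by omega)
    refine ⟨n, eq_of_part_eq hlam.2 (rn_pos hmu n) fun i => ?_⟩
    rw [part_rn]
    split_ifs with hi
    · exact not_not.1 (Nat.find_min hex hi)
    · exact htail i (not_lt.1 hi)

lemma one_sub_zpow_mul_inv_eq_zero_iff {q : ℂ} (hq : q ≠ 0)
    (hroot : ∀ m : ℤ, m ≠ 0 → q ^ m ≠ 1) (e : ℤ) : 1 - q ^ e * q⁻¹ = 0 ↔ e = 1 := by
  rw [← zpow_neg_one, ← zpow_add₀ hq, sub_eq_zero, eq_comm]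
  constructor
  · intro h
    by_contra he
    exact hroot (e + -1) (by omega) h
  · rintro rfl
    simp

lemma forall_lt_length_forall_lt_part_iff {l : List ℕ} {P : ℕ → ℕ → Prop} :
    (∀ i < l.length, ∀ j < part l i, P i j) ↔ ∀ i j, j < part l i → P i j :=
  ⟨fun h i j hj => h i (lt_length_of_lt_part hj) j hj, fun h i _ j hj => h i j hj⟩

lemma nek_inv_ne_zero_iff {q : ℂ} (hq : q ≠ 0) (hroot : ∀ m : ℤ, m ≠ 0 → q ^ m ≠ 1)
    (lam mu : List ℕ) :
    nek q q⁻¹ lam mu ≠ 0 ↔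
      (∀ i j, j < part lam i → conjPart lam j + part mu i ≠ i + j) ∧
      (∀ i j, j < part mu i → conjPart mu j + part lam i ≠ i + j + 2) := by
  simp only [nek, mul_ne_zero_iff, Finset.prod_ne_zero_iff, Finset.mem_range, ne_eq,
    one_sub_zpow_mul_inv_eq_zero_iff hq hroot, forall_lt_length_forall_lt_part_iff]
  refine and_congr ?_ ?_ <;> refine forall₂_congr fun i j => imp_congr_right fun _ => ?_ <;> omega

theorem stmt5 (q : ℂ) (hq : q ≠ 0) (hroot : ∀ m : ℤ, m ≠ 0 → q ^ m ≠ 1)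
    (lam mu : List ℕ) (hlam : IsPartition lam) (hmu : IsPartition mu) :
    nek q q⁻¹ lam mu ≠ 0 ↔ ∃ n : ℕ, lam = rn n mu := by
  rw [nek_inv_ne_zero_iff hq hroot, forall_cell_ne_iff_le hlam.1 hmu.1,
    forall_cell_ne_add_two_iff hlam.1 hmu.1, ← forall_and, exists_eq_rn_iff hlam hmu.2]
  refine forall_congr' fun i => ?_
  have := part_antitone hmu.1 (i.le_add_right 1)
  omega
end

section
/- The connection matrix is invariant under simultaneous shifts σ₂ ↦ σ₂ + h_i and σ₀ ↦ σ₀ + h_j for any 1 ≤ i, j ≤ N: B[θ₁, 1/N; σ₂+h_i, σ₀+h_j | x] = B[θ₁, 1/N; σ₂, σ₀ | x], where h_i ∈ ℂ^N has components (h_i)^{(j)} = δ_{ij} − 1/N. -/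
/-
ϑ is anti-periodic, ϑ(u + 1) = -ϑ(u), because (a;q)_∞ = (1 - a)(aq;q)_∞. The entries of B involve
σ₂ and σ₀ only through differences σ₂^{(i)} - σ₀^{(j)} and σ₀^{(j)} - σ₀^{(k)}, so a common constant
shift of σ₂ and σ₀ changes nothing. As h_i = e_i - (1/N)(1, …, 1), it remains to shift σ₂ by e_i and
σ₀ by e_j, and each of these negates B. For σ₂: in column i the numerator ϑ changes sign, in any
other column exactly one factor of the product over k ≠ i does. For σ₀: in a row j' ≠ j only the
factor k = j of the denominator changes sign; in row j the numerator and all N - 1 factors of both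
products do.
-/

open Finset

noncomputable section

/-- (a;q)_∞ = ∏_{j≥0} (1 - a q^j). -/
def qPochInf (a q : ℂ) : ℂ := ∏' j : ℕ, (1 - a * q ^ j)

/-- (a;q,q)_∞ = ∏_{j,k≥0} (1 - a q^{j+k}). -/
def qPochInf2 (a q : ℂ) : ℂ := ∏' p : ℕ × ℕ, (1 - a * q ^ (p.1 + p.2))

/-- ϑ(u) = q^{u(u-1)/2} (q^u;q)_∞ (q^{1-u};q)_∞ (q;q)_∞, with q^u = exp(u log q). -/
def theta (q u : ℂ) : ℂ :=
  q ^ (u * (u - 1) / 2) * (qPochInf (q ^ u) q * qPochInf (q ^ (1 - u)) q * qPochInf q q)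

/-- Γ_q(u) = (q;q)_∞/(q^u;q)_∞ · (1-q)^{1-u}. -/
def qGamma (q u : ℂ) : ℂ := qPochInf q q / qPochInf (q ^ u) q * (1 - q) ^ ((1 : ℂ) - u)

/-- G_q(u) = (q^u;q,q)_∞/(q;q,q)_∞ · (q;q)_∞^{u-1} · (1-q)^{-(u-1)(u-2)/2}. -/
def qBarnes (q u : ℂ) : ℂ :=
  qPochInf2 (q ^ u) q / qPochInf2 q q * (qPochInf q q) ^ (u - 1) *
    (1 - q) ^ (-(u - 1) * (u - 2) / 2)

/-- The weight h_i of the vector representation: (h_i)^{(j)} = δ_{ij} - 1/N. -/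
def hvec (N : ℕ) (i : Fin N) : Fin N → ℂ := fun j => (if j = i then 1 else 0) - 1 / (N : ℂ)

/-- The connection matrix B[θ₁, 1/N; σ₂, σ₀ | q^u], entries B_{j,i}. -/
def connB (q : ℂ) (N : ℕ) (th : ℂ) (s2 s0 : Fin N → ℂ) (u : ℂ) : Matrix (Fin N) (Fin N) ℂ :=
  Matrix.of fun j i =>
    theta q (1 - 1 / (N : ℂ) + s2 i + ((N : ℂ) - 1) * th - s0 j + u) / theta q ((N : ℂ) * th + u)
      * (∏ k ∈ Finset.univ.erase i, theta q (1 / (N : ℂ) - s2 k + th + s0 j))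
      / ∏ k ∈ Finset.univ.erase j, theta q (s0 j - s0 k)

lemma multipliable_one_sub_mul_pow (a : ℂ) {q : ℂ} (hq : ‖q‖ < 1) :
    Multipliable fun j : ℕ => 1 - a * q ^ j := by
  have hs : Summable fun j : ℕ => ‖-(a * q ^ j)‖ := by
    simpa using (summable_geometric_of_lt_one (norm_nonneg q) hq).mul_left ‖a‖
  simpa only [← sub_eq_add_neg] using multipliable_one_add_of_summable hs

lemma qPochInf_eq_one_sub_mul {q : ℂ} (hq : ‖q‖ < 1) (a : ℂ) :
    qPochInf a q = (1 - a) * qPochInf (a * q) q := by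
  have hshift : ∀ j : ℕ, a * q ^ (j + 1) = a * q * q ^ j := fun j => by ring
  have hm : Multipliable fun j : ℕ => 1 - a * q ^ (j + 1) := by
    simpa only [hshift] using multipliable_one_sub_mul_pow (a * q) hq
  rw [qPochInf, qPochInf, tprod_eq_zero_mul' (f := fun j : ℕ => 1 - a * q ^ j) hm, pow_zero,
    mul_one]
  simp only [hshift]

lemma theta_add_one {q : ℂ} (hq0 : q ≠ 0) (hq1 : ‖q‖ < 1) (u : ℂ) :
    theta q (u + 1) = -theta q u := by
  have hinv : q ^ u * q ^ (-u) = 1 := by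
    rw [← Complex.cpow_add _ _ hq0, add_neg_cancel, Complex.cpow_zero]
  have hexp : q ^ ((u + 1) * (u + 1 - 1) / 2) = q ^ (u * (u - 1) / 2) * q ^ u := by
    rw [← Complex.cpow_add _ _ hq0]; ring_nf
  rw [theta, theta, hexp, show (1 : ℂ) - (u + 1) = -u by ring,
    Complex.cpow_add _ _ hq0, Complex.cpow_one, show (1 : ℂ) - u = -u + 1 by ring,
    Complex.cpow_add _ _ hq0, Complex.cpow_one, qPochInf_eq_one_sub_mul hq1 (q ^ u),
    qPochInf_eq_one_sub_mul hq1 (q ^ (-u))]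
  linear_combination (-(q ^ (u * (u - 1) / 2) * qPochInf (q ^ u * q) q *
    qPochInf (q ^ (-u) * q) q * qPochInf q q)) * hinv

lemma theta_sub_one {q : ℂ} (hq0 : q ≠ 0) (hq1 : ‖q‖ < 1) (u : ℂ) :
    theta q (u - 1) = -theta q u := by
  rw [← neg_neg (theta q (u - 1)), ← theta_add_one hq0 hq1, sub_add_cancel]

lemma theta_add_single_apply {ι : Type*} [DecidableEq ι] {q : ℂ} (hq0 : q ≠ 0) (hq1 : ‖q‖ < 1)
    (u : ℂ) (i k : ι) :
    theta q (u + (Pi.single i 1 : ι → ℂ) k) = (if k = i then -1 else 1) * theta q u := by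
  rw [Pi.single_apply]
  split_ifs
  · rw [theta_add_one hq0 hq1, neg_one_mul]
  · rw [add_zero, one_mul]

lemma theta_sub_single_apply {ι : Type*} [DecidableEq ι] {q : ℂ} (hq0 : q ≠ 0) (hq1 : ‖q‖ < 1)
    (u : ℂ) (i k : ι) :
    theta q (u - (Pi.single i 1 : ι → ℂ) k) = (if k = i then -1 else 1) * theta q u := by
  rw [Pi.single_apply]
  split_ifs
  · rw [theta_sub_one hq0 hq1, neg_one_mul]
  · rw [sub_zero, one_mul]

lemma prod_erase_ite_eq_neg_one {ι R : Type*} [Fintype ι] [DecidableEq ι] [CommRing R]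
    (i m : ι) :
    ∏ k ∈ univ.erase m, (if k = i then (-1 : R) else 1) = -(if m = i then -1 else 1) := by
  have htot := mul_prod_erase univ (fun k => if k = i then (-1 : R) else 1) (mem_univ m)
  rw [prod_ite_eq' univ i, if_pos (mem_univ i)] at htot
  split_ifs at htot ⊢
  · linear_combination -htot
  · linear_combination htot

section thetaEntry

variable {ι : Type*} [Fintype ι] [DecidableEq ι]

def thetaEntry (q α β D : ℂ) (x y : ι → ℂ) (j i : ι) : ℂ :=
  theta q (α + x i - y j) / D * (∏ k ∈ univ.erase i, theta q (β + y j - x k))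
    / ∏ k ∈ univ.erase j, theta q (y j - y k)

lemma thetaEntry_add_const (q α β D c : ℂ) (x y : ι → ℂ) :
    thetaEntry q α β D (x + fun _ => c) (y + fun _ => c) = thetaEntry q α β D x y := by
  funext j i
  simp only [thetaEntry, Pi.add_apply, ← add_assoc, add_sub_add_right_eq_sub]

lemma thetaEntry_add_single_left {q : ℂ} (hq0 : q ≠ 0) (hq1 : ‖q‖ < 1) (α β D : ℂ)
    (x y : ι → ℂ) (i : ι) :
    thetaEntry q α β D (x + Pi.single i 1 : ι → ℂ) y = -thetaEntry q α β D x y := by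
  funext j i'
  have hnum : theta q (α + (x + Pi.single i 1 : ι → ℂ) i' - y j) =
      (if i' = i then -1 else 1) * theta q (α + x i' - y j) := by
    rw [Pi.add_apply, ← add_assoc, add_sub_right_comm, theta_add_single_apply hq0 hq1]
  have hprod : ∏ k ∈ univ.erase i', theta q (β + y j - (x + Pi.single i 1 : ι → ℂ) k) =
      -(if i' = i then -1 else 1) * ∏ k ∈ univ.erase i', theta q (β + y j - x k) := by
    simp_rw [Pi.add_apply, ← sub_sub, theta_sub_single_apply hq0 hq1, prod_mul_distrib,
      prod_erase_ite_eq_neg_one]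
  rw [Pi.neg_apply, Pi.neg_apply, thetaEntry, thetaEntry, hnum, hprod]
  split_ifs <;> ring

lemma thetaEntry_add_single_right {q : ℂ} (hq0 : q ≠ 0) (hq1 : ‖q‖ < 1) (α β D : ℂ)
    (x y : ι → ℂ) (j : ι) :
    thetaEntry q α β D x (y + Pi.single j 1 : ι → ℂ) = -thetaEntry q α β D x y := by
  funext j' i
  have hnum : theta q (α + x i - (y + Pi.single j 1 : ι → ℂ) j') =
      (if j' = j then -1 else 1) * theta q (α + x i - y j') := by
    rw [Pi.add_apply, ← sub_sub, theta_sub_single_apply hq0 hq1]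
  have hprod : ∏ k ∈ univ.erase i, theta q (β + (y + Pi.single j 1 : ι → ℂ) j' - x k) =
      (if j' = j then -1 else 1) ^ (Fintype.card ι - 1) *
        ∏ k ∈ univ.erase i, theta q (β + y j' - x k) := by
    simp_rw [Pi.add_apply, ← add_assoc, add_sub_right_comm _ ((Pi.single j 1 : ι → ℂ) j'),
      theta_add_single_apply hq0 hq1, prod_mul_distrib, prod_const,
      card_erase_of_mem (mem_univ _), card_univ]
  have hden : ∏ k ∈ univ.erase j',
        theta q ((y + Pi.single j 1 : ι → ℂ) j' - (y + Pi.single j 1 : ι → ℂ) k) =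
      (if j' = j then -1 else 1) ^ (Fintype.card ι - 1) * -(if j' = j then -1 else 1) *
        ∏ k ∈ univ.erase j', theta q (y j' - y k) := by
    simp_rw [Pi.add_apply, add_sub_add_comm, ← add_sub_assoc, theta_sub_single_apply hq0 hq1,
      theta_add_single_apply hq0 hq1, prod_mul_distrib, prod_const,
      card_erase_of_mem (mem_univ _), card_univ, prod_erase_ite_eq_neg_one]
    ring
  rw [Pi.neg_apply, Pi.neg_apply, thetaEntry, thetaEntry, hnum, hprod, hden]
  split_ifs
  · field_simp
  · simp only [one_pow, one_mul, neg_one_mul, div_neg]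

end thetaEntry

lemma connB_eq_thetaEntry (q : ℂ) (N : ℕ) (th : ℂ) (s2 s0 : Fin N → ℂ) (u : ℂ) :
    connB q N th s2 s0 u = Matrix.of (thetaEntry q (1 - 1 / (N : ℂ) + ((N : ℂ) - 1) * th + u)
      (1 / (N : ℂ) + th) (theta q ((N : ℂ) * th + u)) s2 s0) := by
  ext j i
  simp only [connB, thetaEntry, Matrix.of_apply]
  ring_nf

lemma hvec_eq_single_add_const (N : ℕ) (i : Fin N) :
    hvec N i = Pi.single i 1 + fun _ => -(1 / (N : ℂ)) := by
  funext k
  simp only [hvec, Pi.add_apply, Pi.single_apply, sub_eq_add_neg]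

theorem stmt13_general (q : ℂ) (hq0 : q ≠ 0) (hq1 : ‖q‖ < 1) (N : ℕ)
    (th : ℂ) (s2 s0 : Fin N → ℂ) (u : ℂ)
    (i j : Fin N) :
    connB q N th (s2 + hvec N i) (s0 + hvec N j) u = connB q N th s2 s0 u := by
  rw [connB_eq_thetaEntry, connB_eq_thetaEntry, hvec_eq_single_add_const,
    hvec_eq_single_add_const, ← add_assoc, ← add_assoc, thetaEntry_add_const,
    thetaEntry_add_single_left hq0 hq1, thetaEntry_add_single_right hq0 hq1, neg_neg]

theorem stmt13 (q : ℂ) (hq0 : q ≠ 0) (hq1 : ‖q‖ < 1) (N : ℕ) (hN : 2 ≤ N)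
    (th : ℂ) (s2 s0 : Fin N → ℂ) (u : ℂ)
    (hden1 : theta q ((N : ℂ) * th + u) ≠ 0)
    (hden2 : ∀ j k : Fin N, j ≠ k → theta q (s0 j - s0 k) ≠ 0)
    (i j : Fin N) :
    connB q N th (s2 + hvec N i) (s0 + hvec N j) u = connB q N th s2 s0 u :=
  stmt13_general q hq0 hq1 N th s2 s0 u i j
end
end
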